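/- arXiv:1902.01882 — 2 statements merged into one kernel-verified Lean document; each statement's English description precedes it below -/
import Mathlib

section
/- For integers n > 1, d ≥ 1, and any integer k with 1 ≤ k ≤ d-1, the function f(k) = C(k+n, n) + C(d-k+n, n) - 2 satisfies f(k) ≤ f(1), i.e., C(k+n,n) + C(d-k+n,n) ≤ C(1+n,n) + C(d-1+n,n). -/
lemma step_aux (n d k : ℕ) (hn : 1 ≤ n) (h : 2*k+1 ≤ d) :
    (k+1 + n).choose n + (d - (k+1) + n).choose n ≤ (k + n).choose n + (d - k + n).choose n := by
  obtain ⟨m, rfl⟩ : ∃ m, n = m + 1 := ⟨n - 1, by omega⟩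
  have e1 : k + 1 + (m+1) = (k + m + 1) + 1 := by omega
  have e2 : d - k + (m+1) = (d - (k+1) + m + 1) + 1 := by omega
  have e3 : k + (m+1) = k + m + 1 := by omega
  have e4 : d - (k+1) + (m+1) = d - (k+1) + m + 1 := by omega
  have A : ((k+m+1)+1).choose (m+1) = (k+m+1).choose m + (k+m+1).choose (m+1) :=
    Nat.choose_succ_succ _ _
  have B : ((d-(k+1)+m+1)+1).choose (m+1)
      = (d-(k+1)+m+1).choose m + (d-(k+1)+m+1).choose (m+1) :=
    Nat.choose_succ_succ _ _
  have C : (k + m + 1).choose m ≤ (d - (k+1) + m + 1).choose m :=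
    Nat.choose_le_choose m (by omega)
  simp only [e1, e2, e3, e4]
  omega

lemma down_aux (n d k : ℕ) (hn : 1 ≤ n) (hk1 : 1 ≤ k) (hk : 2*k ≤ d) :
    (k + n).choose n + (d - k + n).choose n ≤ (1 + n).choose n + (d - 1 + n).choose n := by
  induction k with
  | zero => omega
  | succ j ih =>
    rcases Nat.eq_or_lt_of_le hk1 with h1 | h1
    · simp [← h1]
    · calc (j+1 + n).choose n + (d - (j+1) + n).choose n
          ≤ (j + n).choose n + (d - j + n).choose n := step_aux n d j hn (by omega)
        _ ≤ _ := ih (by omega) (by omega)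

theorem stmt_0 (n d k : ℕ) (hn : 1 < n) (hd : 1 ≤ d) (hk1 : 1 ≤ k) (hk2 : k ≤ d - 1) :
    (k + n).choose n + (d - k + n).choose n ≤ (1 + n).choose n + (d - 1 + n).choose n := by
  rcases le_or_gt (2*k) d with h | h
  · exact down_aux n d k (by omega) hk1 h
  · have h1 : d - (d - k) = k := by omega
    have := down_aux n d (d - k) (by omega) (by omega) (by omega)
    rw [h1] at this
    omega
end

section
/- Define r : ℕ → ℕ by r(1) = 2 and, for d > 1, r(d) = 1 + min over partitions λ of d with at least two parts of r(λ), where r(λ) := ∑_{j=1}^{d-1} m_j(λ)·r(j) and m_j(λ) is the multiplicity of j in λ. Then for every d > 1 and every partition λ of d with at least two parts, r(λ) = 2d + |λ| - m_1(λ), where |λ| is the number of parts of λ. -/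
/-!
Strong induction shows `r j = 2 j + 1` for every `j > 1`. Granting this below `d`, every part `j`
of a partition `λ` of `d` with at least two parts contributes `2 j + 1` to `r(λ)`, except that a
part `1` contributes `r 1 = 2`; so `r(λ) = 2 d + |λ| - m₁(λ) ≥ 2 d`, with equality for the
partition into `d` ones, and hence `r d = 1 + 2 d`.
-/

/-- `partitionSum r P` is `r(λ) = ∑_{j=1}^{d-1} m_j(λ) · r(j)` for a partition `P` of `d`. -/
def partitionSum (r : ℕ → ℕ) {d : ℕ} (P : Nat.Partition d) : ℕ :=
  ∑ j ∈ Finset.Icc 1 (d - 1), P.parts.count j * r j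

theorem Multiset.sum_map_add_count_one {r : ℕ → ℕ} (hr1 : r 1 = 2) {s : Multiset ℕ}
    (hr : ∀ j ∈ s, j ≠ 1 → r j = 2 * j + 1) :
    (s.map r).sum + s.count 1 = 2 * s.sum + s.card := by
  induction s using Multiset.induction_on with
  | empty => simp
  | cons a s ih =>
    have ih := ih fun j hj => hr j (mem_cons_of_mem hj)
    simp only [map_cons, sum_cons, card_cons, count_cons]
    by_cases ha : a = 1
    · subst ha; simp only [hr1, if_true]; omega
    · rw [hr a (mem_cons_self a s) ha, if_neg (Ne.symm ha)]; omega

namespace Nat.Partition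

variable {d : ℕ} (P : d.Partition)

theorem card_parts_le : P.parts.card ≤ d := by
  simpa [P.parts_sum] using Multiset.card_nsmul_le_sum fun _ hj => P.parts_pos hj

theorem le_pred_of_mem_parts (hP : 2 ≤ P.parts.card) {j : ℕ} (hj : j ∈ P.parts) : j ≤ d - 1 := by
  obtain ⟨t, ht⟩ := Multiset.exists_cons_of_mem hj
  have hsum : j + t.sum = d := by rw [← P.parts_sum, ht, Multiset.sum_cons]
  have hcard : t.card ≤ t.sum := by
    simpa using Multiset.card_nsmul_le_sum
      fun k (hk : k ∈ t) => P.parts_pos (ht ▸ Multiset.mem_cons_of_mem hk)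
  have : 1 ≤ t.card := by rw [ht, Multiset.card_cons] at hP; omega
  omega

theorem partitionSum_eq_sum_map (r : ℕ → ℕ) (hP : 2 ≤ P.parts.card) :
    partitionSum r P = (P.parts.map r).sum := by
  rw [Finset.sum_multiset_map_count, partitionSum]
  refine (Finset.sum_subset (fun j hj => ?_) fun j _ hj => ?_).symm.trans
    (Finset.sum_congr rfl fun _ _ => (smul_eq_mul _ _).symm)
  · rw [Multiset.mem_toFinset] at hj
    exact Finset.mem_Icc.mpr ⟨P.parts_pos hj, P.le_pred_of_mem_parts hP hj⟩
  · simp [Multiset.count_eq_zero.mpr (Multiset.mem_toFinset.not.mp hj)]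

theorem partitionSum_add_count_one {r : ℕ → ℕ} (hr1 : r 1 = 2)
    (hr : ∀ j, 2 ≤ j → j < d → r j = 2 * j + 1) (hP : 2 ≤ P.parts.card) :
    partitionSum r P + P.parts.count 1 = 2 * d + P.parts.card := by
  have hsum : 2 * d = 2 * P.parts.sum := by rw [P.parts_sum]
  rw [P.partitionSum_eq_sum_map r hP, hsum]
  refine Multiset.sum_map_add_count_one hr1 fun j hj hj1 => hr j ?_ ?_
  · have := P.parts_pos hj; omega
  · have := P.le_pred_of_mem_parts hP hj; have := P.card_parts_le; omega

def ones (d : ℕ) : d.Partition where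
  parts := Multiset.replicate d 1
  parts_pos hj := by rw [Multiset.eq_of_mem_replicate hj]; exact Nat.one_pos
  parts_sum := by simp

@[simp]
theorem card_ones_parts : (ones d).parts.card = d := Multiset.card_replicate d 1

@[simp]
theorem count_one_ones_parts : (ones d).parts.count 1 = d := Multiset.count_replicate_self 1 d

end Nat.Partition

theorem eq_two_mul_add_one_of_partitionSum_rec (r : ℕ → ℕ) (h1 : r 1 = 2)
    (hrec : ∀ d, 1 < d →
      r d = 1 + sInf {s | ∃ P : Nat.Partition d, 2 ≤ P.parts.card ∧ s = partitionSum r P})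
    (d : ℕ) (hd : 1 < d) : r d = 2 * d + 1 := by
  induction d using Nat.strong_induction_on with
  | _ d ih =>
    have hr : ∀ j, 2 ≤ j → j < d → r j = 2 * j + 1 := fun j h2 hjd => ih j hjd h2
    set S := {s | ∃ P : Nat.Partition d, 2 ≤ P.parts.card ∧ s = partitionSum r P}
    have hones : 2 * d ∈ S := by
      have hcard : 2 ≤ (Nat.Partition.ones d).parts.card := by
        rw [Nat.Partition.card_ones_parts]; exact hd
      refine ⟨.ones d, hcard, ?_⟩
      have := (Nat.Partition.ones d).partitionSum_add_count_one h1 hr hcard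
      simp only [Nat.Partition.card_ones_parts, Nat.Partition.count_one_ones_parts] at this
      omega
    have hlower : ∀ s ∈ S, 2 * d ≤ s := by
      rintro s ⟨P, hP, rfl⟩
      have := P.partitionSum_add_count_one h1 hr hP
      have := Multiset.count_le_card 1 P.parts
      omega
    rw [hrec d hd, le_antisymm (Nat.sInf_le hones) (le_csInf ⟨_, hones⟩ hlower)]
    ring

theorem stmt_5_general (r : ℕ → ℕ) (h1 : r 1 = 2)
    (hrec : ∀ d, 1 < d →
      r d = 1 + sInf {s | ∃ P : Nat.Partition d, 2 ≤ P.parts.card ∧ s = partitionSum r P})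
    (d : ℕ) (P : Nat.Partition d) (hP : 2 ≤ P.parts.card) :
    partitionSum r P = 2 * d + P.parts.card - P.parts.count 1 := by
  have := P.partitionSum_add_count_one h1
    (fun j hj _ => eq_two_mul_add_one_of_partitionSum_rec r h1 hrec j hj) hP
  omega

theorem stmt_5 (r : ℕ → ℕ) (h1 : r 1 = 2)
    (hrec : ∀ d, 1 < d →
      r d = 1 + sInf {s | ∃ P : Nat.Partition d, 2 ≤ P.parts.card ∧ s = partitionSum r P})
    (d : ℕ) (hd : 1 < d) (P : Nat.Partition d) (hP : 2 ≤ P.parts.card) :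
    partitionSum r P = 2 * d + P.parts.card - P.parts.count 1 :=
  stmt_5_general r h1 hrec d P hP
end
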